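/- Assume A is indecomposable of indefinite type, let w = s 1 ∘ s 2 ∘ ⋯ ∘ s n be the Coxeter element, and let α be a positive imaginary root. Then w^l α ∈ Δ₊ for every integer l, and ht(w^l α) tends to infinity both as l → +∞ and as l → −∞. -/

import Mathlib

/-!
Write `e i` for the standard basis and `ℓ` for the word length in the `s i`. The heart of the
matter is that `ℓ (g * s i) ≥ ℓ g` forces `g (e i) ≥ 0`; as in Humphreys' proof for Coxeter
groups this reduces, by induction on `ℓ g`, to the rank-two subgroups `⟨s i, s j⟩`. There the
alternating words act on `span {e i, e j}` by an explicit recursion: if `A i j * A j i ≥ 4` the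
coefficients stay nonnegative, and otherwise `(s i * s j) ^ m = 1` for `m ∈ {2, 3, 4, 6}`, so
longer alternating words are not reduced. Consequently `κ ≤ g κ` whenever `A *ᵥ κ ≤ 0`, and
every positive imaginary root is a positive vector.

If `w ^ m α = α` with `m > 0`, then `β = ∑ t < m, w ^ t α` is a nonzero vector `≥ 0` fixed by
`w = s 1 ⋯ s n`; since each `s i` moves only the `i`-th coordinate, `β` is fixed by every `s i`,
i.e. `A *ᵥ β = 0`. For `A` indecomposable `β` is then strictly positive, which the indefinite
type excludes. Hence `l ↦ w ^ l α` is injective, and only finitely many vectors `≥ 0` have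
bounded height.
-/

open Matrix Filter Pointwise

namespace KacMoodyPaper

variable {n : ℕ}

/-- `A` is a generalized Cartan matrix. -/
def IsGCM (A : Matrix (Fin n) (Fin n) ℤ) : Prop :=
  (∀ i, A i i = 2) ∧ (∀ i j, i ≠ j → A i j ≤ 0) ∧ (∀ i j, A i j = 0 ↔ A j i = 0)

/-- The simple reflection `s i` as a linear map: `s i v = v - (A *ᵥ v) i • e i`. -/
def sMap (A : Matrix (Fin n) (Fin n) ℤ) (i : Fin n) : (Fin n → ℤ) →ₗ[ℤ] (Fin n → ℤ) where
  toFun v := v - (A.mulVec v i) • Pi.single i 1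
  map_add' x y := by
    simp only [Matrix.mulVec_add, Pi.add_apply, add_smul]
    abel
  map_smul' c x := by
    simp only [Matrix.mulVec_smul, Pi.smul_apply, smul_eq_mul, RingHom.id_apply, smul_sub,
      smul_smul]

theorem sMap_involutive (A : Matrix (Fin n) (Fin n) ℤ) (i : Fin n) (h2 : A i i = 2)
    (v : Fin n → ℤ) : sMap A i (sMap A i v) = v := by
  have hAe : A.mulVec (Pi.single i 1) i = A i i := by
    simp [Matrix.mulVec_single]
  simp only [sMap, LinearMap.coe_mk, AddHom.coe_mk, Matrix.mulVec_sub, Matrix.mulVec_smul,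
    Pi.sub_apply, Pi.smul_apply, hAe, h2, smul_eq_mul]
  ring_nf

/-- The simple reflection `s i` as a `ℤ`-linear automorphism of `ℤ^n`
(determined by `s i (e j) = e j - A i j • e i`). -/
def s (A : Matrix (Fin n) (Fin n) ℤ) (h2 : ∀ i, A i i = 2) (i : Fin n) :
    (Fin n → ℤ) ≃ₗ[ℤ] (Fin n → ℤ) :=
  LinearEquiv.ofLinear (sMap A i) (sMap A i)
    (LinearMap.ext fun v => sMap_involutive A i (h2 i) v)
    (LinearMap.ext fun v => sMap_involutive A i (h2 i) v)

/-- The Coxeter element `w = s 1 ∘ s 2 ∘ ⋯ ∘ s n` (applying `s n` first). -/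
def cox (A : Matrix (Fin n) (Fin n) ℤ) (h2 : ∀ i, A i i = 2) :
    (Fin n → ℤ) ≃ₗ[ℤ] (Fin n → ℤ) :=
  (List.ofFn (fun i : Fin n => s A h2 i)).prod

/-- The Weyl group: the subgroup of `GL(n, ℤ)` generated by the simple reflections. -/
def weyl (A : Matrix (Fin n) (Fin n) ℤ) (h2 : ∀ i, A i i = 2) :
    Subgroup ((Fin n → ℤ) ≃ₗ[ℤ] (Fin n → ℤ)) :=
  Subgroup.closure (Set.range (s A h2))

/-- The word length of `ω` with respect to the generators `s 1, …, s n`. -/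
noncomputable def len (A : Matrix (Fin n) (Fin n) ℤ) (h2 : ∀ i, A i i = 2)
    (ω : (Fin n → ℤ) ≃ₗ[ℤ] (Fin n → ℤ)) : ℕ :=
  sInf {k | ∃ f : Fin k → Fin n, ω = (List.ofFn (fun j => s A h2 (f j))).prod}

/-- `v ∈ ℤ^n` is positive: nonzero with all coordinates `≥ 0`. -/
def IsPos (v : Fin n → ℤ) : Prop := v ≠ 0 ∧ ∀ i, 0 ≤ v i

/-- The height of a vector: the sum of its coordinates. -/
def ht (v : Fin n → ℤ) : ℤ := ∑ i, v i

/-- The graph `Γ` on `{1, …, n}` with an edge between `i ≠ j` iff `A i j ≠ 0`. -/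
def gcmGraph (A : Matrix (Fin n) (Fin n) ℤ) (hsym : ∀ i j, A i j = 0 ↔ A j i = 0) :
    SimpleGraph (Fin n) where
  Adj i j := i ≠ j ∧ A i j ≠ 0
  symm := by
    constructor
    rintro i j ⟨hij, h⟩
    exact ⟨hij.symm, fun h0 => h ((hsym i j).mpr h0)⟩
  loopless := by constructor; rintro i ⟨h, -⟩; exact h rfl

/-- `A` is indecomposable: the graph `Γ` is connected. -/
def Indecomposable (A : Matrix (Fin n) (Fin n) ℤ) (hsym : ∀ i j, A i j = 0 ↔ A j i = 0) :
    Prop :=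
  (gcmGraph A hsym).Connected

/-- `A` is of indefinite type: there is `u > 0` (componentwise) with `A·u < 0` componentwise. -/
def IndefiniteType (A : Matrix (Fin n) (Fin n) ℤ) : Prop :=
  ∃ u : Fin n → ℤ, (∀ i, 0 < u i) ∧ ∀ i, (A.mulVec u) i < 0

/-- The fundamental set `K`: positive vectors with connected support and `A·v ≤ 0`. -/
def fundK (A : Matrix (Fin n) (Fin n) ℤ) (hsym : ∀ i j, A i j = 0 ↔ A j i = 0) :
    Set (Fin n → ℤ) :=
  {v | IsPos v ∧ ((gcmGraph A hsym).induce {i | v i ≠ 0}).Connected ∧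
    ∀ i, (A.mulVec v) i ≤ 0}

/-- The real roots: the `W`-orbits of the standard basis vectors. -/
def realRoots (A : Matrix (Fin n) (Fin n) ℤ) (h2 : ∀ i, A i i = 2) : Set (Fin n → ℤ) :=
  {v | ∃ g ∈ weyl A h2, ∃ i : Fin n, v = g (Pi.single i 1)}

/-- The positive imaginary roots: the `W`-orbit of the fundamental set `K`. -/
def posImRoots (A : Matrix (Fin n) (Fin n) ℤ) (h2 : ∀ i, A i i = 2)
    (hsym : ∀ i j, A i j = 0 ↔ A j i = 0) : Set (Fin n → ℤ) :=
  {v | ∃ g ∈ weyl A h2, ∃ k ∈ fundK A hsym, v = g k}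

/-- The set of roots `Δ`. -/
def roots (A : Matrix (Fin n) (Fin n) ℤ) (h2 : ∀ i, A i i = 2)
    (hsym : ∀ i j, A i j = 0 ↔ A j i = 0) : Set (Fin n → ℤ) :=
  realRoots A h2 ∪ posImRoots A h2 hsym ∪ (-(posImRoots A h2 hsym))

/-- The set of positive roots `Δ₊`. -/
def posRoots (A : Matrix (Fin n) (Fin n) ℤ) (h2 : ∀ i, A i i = 2)
    (hsym : ∀ i j, A i j = 0 ↔ A j i = 0) : Set (Fin n → ℤ) :=
  {v ∈ roots A h2 hsym | IsPos v}

/-- The set of negative roots `Δ₋ = -Δ₊`. -/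
def negRoots (A : Matrix (Fin n) (Fin n) ℤ) (h2 : ∀ i, A i i = 2)
    (hsym : ∀ i j, A i j = 0 ↔ A j i = 0) : Set (Fin n → ℤ) :=
  -(posRoots A h2 hsym)

section

open CoxeterSystem

variable {A : Matrix (Fin n) (Fin n) ℤ} {h2 : ∀ i, A i i = 2}

lemma s_apply (i : Fin n) (v : Fin n → ℤ) : s A h2 i v = v - (A *ᵥ v) i • Pi.single i 1 :=
  rfl

lemma s_apply_of_ne {i k : Fin n} (v : Fin n → ℤ) (h : k ≠ i) : s A h2 i v k = v k := by
  simp [s_apply, Pi.single_eq_of_ne h]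

lemma s_apply_of_mulVec_eq_zero {i : Fin n} {v : Fin n → ℤ} (h : (A *ᵥ v) i = 0) :
    s A h2 i v = v := by
  simp [s_apply, h]

lemma s_mul_self (i : Fin n) : s A h2 i * s A h2 i = 1 :=
  LinearEquiv.ext (sMap_involutive A i (h2 i))

lemma s_inv (i : Fin n) : (s A h2 i)⁻¹ = s A h2 i :=
  inv_eq_of_mul_eq_one_right (s_mul_self i)

lemma s_mem_weyl (i : Fin n) : s A h2 i ∈ weyl A h2 :=
  Subgroup.subset_closure ⟨i, rfl⟩

variable (A h2) in
def wordProd (l : List (Fin n)) : (Fin n → ℤ) ≃ₗ[ℤ] (Fin n → ℤ) :=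
  (l.map (s A h2)).prod

@[simp] lemma wordProd_nil : wordProd A h2 [] = 1 := rfl

lemma wordProd_cons (i : Fin n) (l : List (Fin n)) :
    wordProd A h2 (i :: l) = s A h2 i * wordProd A h2 l := by
  simp [wordProd]

lemma wordProd_append (l l' : List (Fin n)) :
    wordProd A h2 (l ++ l') = wordProd A h2 l * wordProd A h2 l' := by
  simp [wordProd]

lemma wordProd_concat (l : List (Fin n)) (i : Fin n) :
    wordProd A h2 (l.concat i) = wordProd A h2 l * s A h2 i := by
  simp [wordProd]

lemma wordProd_reverse (l : List (Fin n)) :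
    wordProd A h2 l.reverse = (wordProd A h2 l)⁻¹ := by
  induction l with
  | nil => simp
  | cons i l ih => simp [wordProd_append, wordProd_cons, ih, s_inv]

lemma wordProd_mem_weyl (l : List (Fin n)) : wordProd A h2 l ∈ weyl A h2 := by
  induction l with
  | nil => exact one_mem _
  | cons i l ih => rw [wordProd_cons]; exact mul_mem (s_mem_weyl i) ih

lemma exists_wordProd_eq {g : (Fin n → ℤ) ≃ₗ[ℤ] (Fin n → ℤ)} (hg : g ∈ weyl A h2) :
    ∃ l, wordProd A h2 l = g := by
  induction hg using Subgroup.closure_induction with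
  | mem x hx => obtain ⟨i, rfl⟩ := hx; exact ⟨[i], by simp [wordProd]⟩
  | one => exact ⟨[], rfl⟩
  | mul x y _ _ ihx ihy =>
    obtain ⟨l, rfl⟩ := ihx
    obtain ⟨l', rfl⟩ := ihy
    exact ⟨l ++ l', wordProd_append l l'⟩
  | inv x _ ihx =>
    obtain ⟨l, rfl⟩ := ihx
    exact ⟨l.reverse, wordProd_reverse l⟩

lemma wordProd_apply_of_not_mem {l : List (Fin n)} {k : Fin n} (hk : k ∉ l) (v : Fin n → ℤ) :
    wordProd A h2 l v k = v k := by
  induction l with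
  | nil => rfl
  | cons i l ih =>
    rw [List.mem_cons, not_or] at hk
    rw [wordProd_cons, LinearEquiv.mul_apply, s_apply_of_ne _ hk.1, ih hk.2]

lemma wordProd_ofFn {k : ℕ} (f : Fin k → Fin n) :
    wordProd A h2 (List.ofFn f) = (List.ofFn fun j => s A h2 (f j)).prod := by
  rw [wordProd, List.map_ofFn]
  rfl

lemma len_wordProd_le (l : List (Fin n)) : len A h2 (wordProd A h2 l) ≤ l.length :=
  Nat.sInf_le ⟨l.get, by rw [← wordProd_ofFn, List.ofFn_get]⟩

lemma exists_reduced_word {g : (Fin n → ℤ) ≃ₗ[ℤ] (Fin n → ℤ)} (hg : g ∈ weyl A h2) :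
    ∃ l, wordProd A h2 l = g ∧ l.length = len A h2 g := by
  obtain ⟨l, rfl⟩ := exists_wordProd_eq hg
  obtain ⟨f, hf⟩ : len A h2 (wordProd A h2 l) ∈ {k | ∃ f : Fin k → Fin n,
      wordProd A h2 l = (List.ofFn fun j => s A h2 (f j)).prod} :=
    Nat.sInf_mem ⟨l.length, l.get, by rw [← wordProd_ofFn, List.ofFn_get]⟩
  exact ⟨List.ofFn f, (wordProd_ofFn f).trans hf.symm, List.length_ofFn⟩

lemma eq_one_of_len_eq_zero {g : (Fin n → ℤ) ≃ₗ[ℤ] (Fin n → ℤ)} (hg : g ∈ weyl A h2)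
    (h : len A h2 g = 0) : g = 1 := by
  obtain ⟨l, rfl, hl⟩ := exists_reduced_word hg
  rw [h, List.length_eq_zero_iff] at hl
  rw [hl, wordProd_nil]

lemma len_mul_le {g h : (Fin n → ℤ) ≃ₗ[ℤ] (Fin n → ℤ)} (hg : g ∈ weyl A h2) (hh : h ∈ weyl A h2) :
    len A h2 (g * h) ≤ len A h2 g + len A h2 h := by
  obtain ⟨l, rfl, hl⟩ := exists_reduced_word hg
  obtain ⟨l', rfl, hl'⟩ := exists_reduced_word hh
  simpa [← wordProd_append, ← hl, ← hl'] using len_wordProd_le (l ++ l')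

lemma exists_len_mul_s_lt {g : (Fin n → ℤ) ≃ₗ[ℤ] (Fin n → ℤ)} (hg : g ∈ weyl A h2)
    (h : len A h2 g ≠ 0) : ∃ j, len A h2 (g * s A h2 j) < len A h2 g := by
  obtain ⟨l, rfl, hl⟩ := exists_reduced_word hg
  obtain rfl | ⟨l', j, rfl⟩ := List.eq_nil_or_concat l
  · simp_all
  have hprod : wordProd A h2 (l'.concat j) * s A h2 j = wordProd A h2 l' := by
    rw [wordProd_concat, mul_assoc, s_mul_self, mul_one]
  refine ⟨j, ?_⟩
  rw [hprod, ← hl]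
  simpa using len_wordProd_le l'

variable (A h2) in
def altProd (i j : Fin n) (t : ℕ) : (Fin n → ℤ) ≃ₗ[ℤ] (Fin n → ℤ) :=
  wordProd A h2 (alternatingWord i j t)

lemma altProd_zero (i j : Fin n) : altProd A h2 i j 0 = 1 := rfl

lemma altProd_succ (i j : Fin n) (t : ℕ) :
    altProd A h2 i j (t + 1) = s A h2 (if Even t then j else i) * altProd A h2 i j t := by
  rw [altProd, alternatingWord_succ', wordProd_cons, altProd]

lemma altProd_succ' (i j : Fin n) (t : ℕ) :
    altProd A h2 i j (t + 1) = altProd A h2 j i t * s A h2 j := by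
  rw [altProd, alternatingWord_succ, wordProd_concat, altProd]

lemma altProd_mem_weyl (i j : Fin n) (t : ℕ) : altProd A h2 i j t ∈ weyl A h2 :=
  wordProd_mem_weyl _

lemma len_altProd_le (i j : Fin n) (t : ℕ) : len A h2 (altProd A h2 i j t) ≤ t :=
  (len_wordProd_le _).trans_eq (length_alternatingWord i j t)

lemma altProd_eq_mul_pow (i j : Fin n) (t : ℕ) :
    altProd A h2 i j t = (if Even t then 1 else s A h2 j) * (s A h2 i * s A h2 j) ^ (t / 2) := by
  induction t with
  | zero => rfl
  | succ t ih =>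
    rw [altProd_succ, ih]
    by_cases ht : Even t
    · have ht' : ¬Even (t + 1) := by simp [ht, parity_simps]
      have hdiv : (t + 1) / 2 = t / 2 := Nat.succ_div_of_not_dvd (by rwa [← even_iff_two_dvd])
      simp [ht, ht', hdiv]
    · have ht' : Even (t + 1) := by simp [ht, parity_simps]
      have hdiv : (t + 1) / 2 = t / 2 + 1 := Nat.succ_div_of_dvd ht'.two_dvd
      simp [ht, ht', hdiv, pow_succ', ← mul_assoc]

lemma altProd_add_two_mul {i j : Fin n} {m : ℕ} (hm : (s A h2 i * s A h2 j) ^ m = 1) (t : ℕ) :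
    altProd A h2 i j (t + 2 * m) = altProd A h2 i j t := by
  have hdiv : (t + 2 * m) / 2 = t / 2 + m := by omega
  simp [altProd_eq_mul_pow, hdiv, pow_add, hm, Nat.even_add]

lemma s_mul_s_eq_inv (i j : Fin n) : s A h2 j * s A h2 i = (s A h2 i * s A h2 j)⁻¹ := by
  rw [_root_.mul_inv_rev, s_inv, s_inv]

lemma altProd_eq_altProd_sub {i j : Fin n} {m : ℕ} (hm : (s A h2 i * s A h2 j) ^ m = 1) {t : ℕ}
    (ht : t ≤ 2 * m) : altProd A h2 i j t = altProd A h2 j i (2 * m - t) := by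
  have hpow (a b : ℕ) (hab : a + b = m) :
      (s A h2 i * s A h2 j) ^ a = (s A h2 j * s A h2 i) ^ b := by
    rw [s_mul_s_eq_inv i j, inv_pow, eq_inv_iff_mul_eq_one, ← pow_add, hab, hm]
  rcases Nat.even_or_odd' t with ⟨k, rfl | rfl⟩
  · obtain ⟨c, rfl⟩ : ∃ c, m = k + c := ⟨m - k, by omega⟩
    have hsub : 2 * (k + c) - 2 * k = 2 * c := by omega
    simp [altProd_eq_mul_pow, hsub, hpow k c rfl]
  · obtain ⟨c, rfl⟩ : ∃ c, m = k + 1 + c := ⟨m - k - 1, by omega⟩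
    have hsub : 2 * (k + 1 + c) - (2 * k + 1) = 2 * c + 1 := by omega
    have hk : (2 * k + 1) / 2 = k := by omega
    have hc : (2 * c + 1) / 2 = c := by omega
    simp only [altProd_eq_mul_pow, hsub, hk, hc, Nat.not_even_bit1, if_false]
    rw [← hpow (k + 1) c rfl, pow_succ', ← mul_assoc, ← mul_assoc, s_mul_self, one_mul]

lemma len_altProd_add_two_le {i j : Fin n} {m : ℕ} (hm0 : 0 < m)
    (hm : (s A h2 i * s A h2 j) ^ m = 1) {t : ℕ} (ht : m < t) :
    len A h2 (altProd A h2 i j t) + 2 ≤ t := by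
  rcases le_or_gt t (2 * m) with ht2 | ht2
  · have := len_altProd_le (A := A) (h2 := h2) j i (2 * m - t)
    rw [altProd_eq_altProd_sub hm ht2]
    omega
  · obtain ⟨u, rfl⟩ : ∃ u, t = u + 2 * m := ⟨t - 2 * m, by omega⟩
    have := len_altProd_le (A := A) (h2 := h2) i j u
    rw [altProd_add_two_mul hm]
    omega

/-- The coordinates of `altProd A h2 i j t (p.1 • e i + p.2 • e j)` in the basis `e i, e j`
when `c = A i j` and `d = A j i` (see `altProd_apply_pair`). -/
def dihedralCoeff (c d : ℤ) : ℕ → ℤ × ℤ → ℤ × ℤ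
  | 0, p => p
  | t + 1, p =>
    let q := dihedralCoeff c d t p
    if Even t then (q.1, -q.2 - d * q.1) else (-q.1 - c * q.2, q.2)

lemma exists_dihedralCoeff_period {c d : ℤ} (hc : c ≤ 0) (hd : d ≤ 0) (hcd : c = 0 ↔ d = 0)
    (h4 : c * d < 4) :
    ∃ m, 0 < m ∧ dihedralCoeff c d (2 * m) (1, 0) = (1, 0) ∧
      dihedralCoeff c d (2 * m) (0, 1) = (0, 1) ∧
      ∀ r < m, 0 ≤ (dihedralCoeff c d r (1, 0)).1 ∧ 0 ≤ (dihedralCoeff c d r (1, 0)).2 := by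
  obtain ⟨rfl, rfl⟩ | ⟨hc1, hd1⟩ : (c = 0 ∧ d = 0) ∨ (c ≤ -1 ∧ d ≤ -1) := by
    by_cases h : c = 0
    · exact Or.inl ⟨h, hcd.1 h⟩
    · exact Or.inr ⟨by omega, by have := mt hcd.2 h; omega⟩
  · exact ⟨2, by decide⟩
  have hc3 : -3 ≤ c := by nlinarith
  have hd3 : -3 ≤ d := by nlinarith
  interval_cases c <;> interval_cases d <;> first
    | (norm_num at h4; done)
    | exact ⟨3, by decide⟩ | exact ⟨4, by decide⟩ | exact ⟨6, by decide⟩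

lemma dihedralCoeff_nonneg {c d : ℤ} (hc : c < 0) (hd : d < 0) (h4 : 4 ≤ c * d) (t : ℕ) :
    0 ≤ (dihedralCoeff c d t (1, 0)).1 ∧ 0 ≤ (dihedralCoeff c d t (1, 0)).2 := by
  suffices ∀ t, 0 ≤ (dihedralCoeff c d t (1, 0)).1 ∧ 0 ≤ (dihedralCoeff c d t (1, 0)).2 ∧
      if Even t then -c * (dihedralCoeff c d t (1, 0)).2 ≤ 2 * (dihedralCoeff c d t (1, 0)).1
      else -d * (dihedralCoeff c d t (1, 0)).1 ≤ 2 * (dihedralCoeff c d t (1, 0)).2 from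
    ⟨(this t).1, (this t).2.1⟩
  intro t
  induction t with
  | zero => simp [dihedralCoeff]
  | succ t ih =>
    simp only [dihedralCoeff]
    generalize dihedralCoeff c d t (1, 0) = x at ih ⊢
    obtain ⟨p, q⟩ := x
    obtain ⟨hp, hq, hinv⟩ := ih
    by_cases ht : Even t
    · simp only [ht, if_true, Nat.even_add_one, not_true_eq_false, if_false] at hinv ⊢
      have := mul_le_mul_of_nonneg_left hinv (by linarith : 0 ≤ -d)
      exact ⟨hp, by nlinarith, by nlinarith⟩
    · simp only [ht, if_false, Nat.even_add_one, not_false_eq_true, if_true] at hinv ⊢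
      have := mul_le_mul_of_nonneg_left hinv (by linarith : 0 ≤ -c)
      exact ⟨by nlinarith, hq, by nlinarith⟩

lemma eq_one_of_apply_single_eq (g : (Fin n → ℤ) ≃ₗ[ℤ] (Fin n → ℤ)) {i j : Fin n}
    (hdet : A i i * A j j - A i j * A j i ≠ 0)
    (hfix : ∀ v, (A *ᵥ v) i = 0 → (A *ᵥ v) j = 0 → g v = v)
    (hi : g (Pi.single i 1) = Pi.single i 1) (hj : g (Pi.single j 1) = Pi.single j 1) :
    g = 1 := by
  ext1 v
  set d := A i i * A j j - A i j * A j i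
  -- `d • v = u + (d • v - u)` with `u` in the span of `e i, e j` and `A *ᵥ (d • v - u)`
  -- vanishing at `i` and `j`
  set u : Fin n → ℤ := (A j j * (A *ᵥ v) i - A i j * (A *ᵥ v) j) • Pi.single i 1 +
    (A i i * (A *ᵥ v) j - A j i * (A *ᵥ v) i) • Pi.single j 1
  have hu : g u = u := by simp only [u, map_add, map_smul, hi, hj]
  have hrest : g (d • v - u) = d • v - u := by
    apply hfix <;>
    · simp only [u, d, Matrix.mulVec_sub, Matrix.mulVec_add, Matrix.mulVec_smul,
        Matrix.mulVec_single_one, Pi.sub_apply, Pi.add_apply, Pi.smul_apply, smul_eq_mul,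
        Matrix.col_apply]
      ring
  apply smul_right_injective (Fin n → ℤ) hdet
  rw [map_sub, hu, sub_left_inj, map_smul] at hrest
  exact hrest

lemma s_apply_pair (i j : Fin n) (x y : ℤ) :
    s A h2 i (x • Pi.single i 1 + y • Pi.single j 1) =
      (-x - A i j * y) • Pi.single i 1 + y • Pi.single j 1 := by
  have hAv : (A *ᵥ (x • Pi.single i 1 + y • Pi.single j 1)) i = 2 * x + A i j * y := by
    simp only [Matrix.mulVec_add, Matrix.mulVec_smul, Matrix.mulVec_single_one, Pi.add_apply,
      Pi.smul_apply, smul_eq_mul, Matrix.col_apply, h2]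
    ring
  rw [s_apply, hAv]
  module

lemma altProd_apply_pair (i j : Fin n) (t : ℕ) (p : ℤ × ℤ) :
    altProd A h2 i j t (p.1 • Pi.single i 1 + p.2 • Pi.single j 1) =
      (dihedralCoeff (A i j) (A j i) t p).1 • Pi.single i 1 +
        (dihedralCoeff (A i j) (A j i) t p).2 • Pi.single j 1 := by
  induction t with
  | zero => rfl
  | succ t ih =>
    rw [altProd_succ, LinearEquiv.mul_apply, ih]
    simp only [dihedralCoeff]
    split_ifs
    · rw [add_comm, s_apply_pair, add_comm]
    · rw [s_apply_pair]

lemma altProd_apply_of_mulVec_eq_zero {i j : Fin n} {v : Fin n → ℤ} (hi : (A *ᵥ v) i = 0)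
    (hj : (A *ᵥ v) j = 0) (t : ℕ) : altProd A h2 i j t v = v := by
  induction t with
  | zero => rfl
  | succ t ih =>
    rw [altProd_succ, LinearEquiv.mul_apply, ih]
    split_ifs
    exacts [s_apply_of_mulVec_eq_zero hj, s_apply_of_mulVec_eq_zero hi]

lemma s_mul_s_pow_eq_one {i j : Fin n} {m : ℕ} (hdet : A i j * A j i ≠ 4)
    (hi : dihedralCoeff (A i j) (A j i) (2 * m) (1, 0) = (1, 0))
    (hj : dihedralCoeff (A i j) (A j i) (2 * m) (0, 1) = (0, 1)) :
    (s A h2 i * s A h2 j) ^ m = 1 := by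
  have hpow : altProd A h2 i j (2 * m) = (s A h2 i * s A h2 j) ^ m := by
    simp [altProd_eq_mul_pow]
  rw [← hpow]
  refine eq_one_of_apply_single_eq _ (by rw [h2, h2]; contrapose! hdet; linarith)
    (fun v hvi hvj => altProd_apply_of_mulVec_eq_zero hvi hvj _) ?_ ?_
  · simpa [hi] using altProd_apply_pair (h2 := h2) i j (2 * m) (1, 0)
  · simpa [hj] using altProd_apply_pair (h2 := h2) i j (2 * m) (0, 1)

lemma dihedralCoeff_nonneg_of_le_len {i j : Fin n} (hij : A i j ≤ 0) (hji : A j i ≤ 0)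
    (hsym : A i j = 0 ↔ A j i = 0) {r : ℕ}
    (hr : r ≤ len A h2 (altProd A h2 i j r * s A h2 i)) :
    0 ≤ (dihedralCoeff (A i j) (A j i) r (1, 0)).1 ∧
      0 ≤ (dihedralCoeff (A i j) (A j i) r (1, 0)).2 := by
  by_cases h4 : 4 ≤ A i j * A j i
  · have hij0 : A i j ≠ 0 := by rintro h; simp [h] at h4
    exact dihedralCoeff_nonneg (lt_of_le_of_ne hij hij0)
      (lt_of_le_of_ne hji (mt hsym.2 hij0)) h4 r
  obtain ⟨m, hm0, hmi, hmj, hpos⟩ := exists_dihedralCoeff_period hij hji hsym (not_le.1 h4)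
  refine hpos r (not_le.1 fun hmr => ?_)
  have hrel : (s A h2 j * s A h2 i) ^ m = 1 := by
    rw [s_mul_s_eq_inv i j, inv_pow, s_mul_s_pow_eq_one (by omega) hmi hmj, inv_one]
  have hlen := len_altProd_add_two_le hm0 hrel (Nat.lt_succ_of_le hmr)
  rw [altProd_succ'] at hlen
  omega

lemma IsPos.nonneg {v : Fin n → ℤ} (h : IsPos v) : 0 ≤ v :=
  h.2

lemma mul_altProd_succ_inv (g : (Fin n → ℤ) ≃ₗ[ℤ] (Fin n → ℤ)) (i j : Fin n) (t : ℕ) :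
    g * (altProd A h2 i j (t + 1))⁻¹ =
      g * (altProd A h2 i j t)⁻¹ * s A h2 (if Even t then j else i) := by
  rw [altProd_succ, _root_.mul_inv_rev, s_inv, mul_assoc]

lemma len_le_len_mul_altProd_inv_add {g : (Fin n → ℤ) ≃ₗ[ℤ] (Fin n → ℤ)} (hg : g ∈ weyl A h2)
    (i j : Fin n) (t : ℕ) : len A h2 g ≤ len A h2 (g * (altProd A h2 i j t)⁻¹) + t := by
  have h := len_mul_le (mul_mem hg (inv_mem (altProd_mem_weyl i j t)))
    (altProd_mem_weyl (h2 := h2) i j t)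
  rw [inv_mul_cancel_right] at h
  have := len_altProd_le (h2 := h2) i j t
  omega

lemma exists_altProd_factor {g : (Fin n → ℤ) ≃ₗ[ℤ] (Fin n → ℤ)} (hg : g ∈ weyl A h2)
    (i j : Fin n) (hj : len A h2 (g * s A h2 j) < len A h2 g) :
    ∃ v ∈ weyl A h2, ∃ r, 0 < r ∧ g = v * altProd A h2 i j r ∧ len A h2 v + r = len A h2 g ∧
      len A h2 v ≤ len A h2 (v * s A h2 i) ∧ len A h2 v ≤ len A h2 (v * s A h2 j) := by
  classical
  -- the longest alternating word `⋯ s i s j` that a reduced word for `g` can end with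
  let P t := len A h2 (g * (altProd A h2 i j t)⁻¹) + t ≤ len A h2 g
  have hP1 : P 1 := by
    simp only [P, mul_altProd_succ_inv, altProd_zero, inv_one, mul_one, Even.zero,
      if_true]
    omega
  have hPle (t : ℕ) (ht : P t) : t ≤ len A h2 g := by omega
  obtain ⟨r, hr⟩ : ∃ r, r = Nat.findGreatest P (len A h2 g) := ⟨_, rfl⟩
  have hPr : P r := hr ▸ Nat.findGreatest_spec (hPle 1 hP1) hP1
  have hPr1 : ¬P (r + 1) := fun h => by
    have := Nat.le_findGreatest (hPle _ h) h
    omega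
  obtain ⟨r, rfl⟩ : ∃ r', r = r' + 1 :=
    ⟨r - 1, by have := Nat.le_findGreatest (hPle 1 hP1) hP1; omega⟩
  have hlen : len A h2 (g * (altProd A h2 i j (r + 1))⁻¹) + (r + 1) = len A h2 g :=
    le_antisymm hPr (len_le_len_mul_altProd_inv_add hg i j (r + 1))
  have hnext : len A h2 (g * (altProd A h2 i j (r + 1))⁻¹) ≤
      len A h2 (g * (altProd A h2 i j (r + 1))⁻¹ * s A h2 (if Even (r + 1) then j else i)) := by
    simp only [P] at hPr1
    rw [mul_altProd_succ_inv g i j (r + 1)] at hPr1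
    omega
  have hprev : len A h2 (g * (altProd A h2 i j (r + 1))⁻¹) ≤
      len A h2 (g * (altProd A h2 i j (r + 1))⁻¹ * s A h2 (if Even r then j else i)) := by
    have h := len_le_len_mul_altProd_inv_add hg i j r
    have e : g * (altProd A h2 i j (r + 1))⁻¹ * s A h2 (if Even r then j else i) =
        g * (altProd A h2 i j r)⁻¹ := by
      rw [mul_altProd_succ_inv, mul_assoc, s_mul_self, mul_one]
    rw [e]
    omega
  refine ⟨_, mul_mem hg (inv_mem (altProd_mem_weyl i j _)), r + 1, r.succ_pos, by simp, hlen, ?_⟩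
  rcases Nat.even_or_odd r with h | h
  · simp only [h, Nat.even_add_one, not_true_eq_false, if_true, if_false] at hnext hprev
    exact ⟨hnext, hprev⟩
  · simp only [Nat.not_even_iff_odd.2 h, Nat.even_add_one, not_false_eq_true, if_true,
      if_false] at hnext hprev
    exact ⟨hprev, hnext⟩

theorem apply_single_nonneg_of_len_le (hoff : ∀ i j, i ≠ j → A i j ≤ 0)
    (hsym : ∀ i j, A i j = 0 ↔ A j i = 0) {g : (Fin n → ℤ) ≃ₗ[ℤ] (Fin n → ℤ)}
    (hg : g ∈ weyl A h2) {i : Fin n} (hi : len A h2 g ≤ len A h2 (g * s A h2 i)) :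
    0 ≤ g (Pi.single i 1) := by
  induction hL : len A h2 g using Nat.strong_induction_on generalizing g i with
  | _ L ih =>
  rcases Nat.eq_zero_or_pos L with rfl | hL0
  · rw [eq_one_of_len_eq_zero hg hL]
    exact Pi.single_nonneg.2 zero_le_one
  obtain ⟨j, hj⟩ := exists_len_mul_s_lt hg (by omega)
  have hij : i ≠ j := by rintro rfl; omega
  obtain ⟨v, hv, r, hr0, rfl, hlen, hvi, hvj⟩ := exists_altProd_factor hg i j hj
  have hr : r ≤ len A h2 (altProd A h2 i j r * s A h2 i) := by
    have := len_mul_le hv (mul_mem (altProd_mem_weyl i j r) (s_mem_weyl i))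
    rw [← mul_assoc] at this
    omega
  obtain ⟨hp, hq⟩ :=
    dihedralCoeff_nonneg_of_le_len (hoff i j hij) (hoff j i hij.symm) (hsym i j) hr
  have happ := altProd_apply_pair (h2 := h2) i j r (1, 0)
  rw [one_smul, zero_smul, add_zero] at happ
  rw [LinearEquiv.mul_apply, happ, map_add, map_smul, map_smul]
  exact add_nonneg (smul_nonneg hp (ih _ (by omega) hv hvi rfl))
    (smul_nonneg hq (ih _ (by omega) hv hvj rfl))

theorem le_apply_of_mulVec_nonpos (hoff : ∀ i j, i ≠ j → A i j ≤ 0)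
    (hsym : ∀ i j, A i j = 0 ↔ A j i = 0) {g : (Fin n → ℤ) ≃ₗ[ℤ] (Fin n → ℤ)}
    (hg : g ∈ weyl A h2) {κ : Fin n → ℤ} (hκ : A *ᵥ κ ≤ 0) : κ ≤ g κ := by
  induction hL : len A h2 g using Nat.strong_induction_on generalizing g with
  | _ L ih =>
  rcases Nat.eq_zero_or_pos L with rfl | hL0
  · rw [eq_one_of_len_eq_zero hg hL]
    rfl
  obtain ⟨j, hj⟩ := exists_len_mul_s_lt hg (by omega)
  obtain ⟨g, rfl⟩ : ∃ g', g = g' * s A h2 j :=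
    ⟨g * s A h2 j, by rw [mul_assoc, s_mul_self, mul_one]⟩
  rw [mul_assoc, s_mul_self, mul_one] at hj
  have hg' : g ∈ weyl A h2 := by
    simpa only [mul_assoc, s_mul_self, mul_one] using mul_mem hg (s_mem_weyl (h2 := h2) j)
  have hpos := apply_single_nonneg_of_len_le hoff hsym hg' hj.le
  rw [LinearEquiv.mul_apply, s_apply, map_sub, map_smul, sub_eq_add_neg, ← neg_smul]
  exact (ih _ (by omega) hg' rfl).trans
    (le_add_of_nonneg_right (smul_nonneg (neg_nonneg.2 (hκ j)) hpos))

theorem isPos_of_mem_posImRoots (hoff : ∀ i j, i ≠ j → A i j ≤ 0)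
    (hsym : ∀ i j, A i j = 0 ↔ A j i = 0) {α : Fin n → ℤ} (hα : α ∈ posImRoots A h2 hsym) :
    IsPos α := by
  obtain ⟨g, hg, κ, ⟨⟨hκ0, hκpos⟩, -, hAκ⟩, rfl⟩ := hα
  have hle : κ ≤ g κ := le_apply_of_mulVec_nonpos hoff hsym hg hAκ
  exact ⟨fun h => hκ0 (le_antisymm (h ▸ hle) hκpos), fun i => (hκpos i).trans (hle i)⟩

lemma apply_mem_posImRoots {hsym : ∀ i j, A i j = 0 ↔ A j i = 0}
    {g : (Fin n → ℤ) ≃ₗ[ℤ] (Fin n → ℤ)} (hg : g ∈ weyl A h2) {α : Fin n → ℤ}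
    (hα : α ∈ posImRoots A h2 hsym) : g α ∈ posImRoots A h2 hsym := by
  obtain ⟨g', hg', κ, hκ, rfl⟩ := hα
  exact ⟨g * g', mul_mem hg hg', κ, hκ, rfl⟩

lemma cox_eq_wordProd : cox A h2 = wordProd A h2 (List.finRange n) := by
  rw [cox, List.ofFn_eq_map, wordProd]

lemma cox_mem_weyl : cox A h2 ∈ weyl A h2 :=
  cox_eq_wordProd ▸ wordProd_mem_weyl _

lemma mulVec_apply_eq_zero_of_wordProd_apply_eq {l : List (Fin n)} (hl : l.Nodup)
    {v : Fin n → ℤ} (h : wordProd A h2 l v = v) {i : Fin n} (hi : i ∈ l) : (A *ᵥ v) i = 0 := by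
  induction l with
  | nil => simp at hi
  | cons k l ih =>
    rw [List.nodup_cons] at hl
    rw [wordProd_cons, LinearEquiv.mul_apply] at h
    -- the other factors do not touch the `k`-th coordinate, so `s k` does not move it either
    have hk : (A *ᵥ wordProd A h2 l v) k = 0 := by
      have := congrFun h k
      rw [s_apply, Pi.sub_apply, wordProd_apply_of_not_mem hl.1] at this
      simpa using this
    have hu : wordProd A h2 l v = v := by rwa [s_apply_of_mulVec_eq_zero hk] at h
    rcases List.mem_cons.1 hi with rfl | hi
    · rwa [hu] at hk
    · exact ih hl.2 hu hi

lemma mulVec_eq_zero_of_cox_apply_eq {v : Fin n → ℤ} (h : cox A h2 v = v) : A *ᵥ v = 0 :=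
  funext fun i => mulVec_apply_eq_zero_of_wordProd_apply_eq (List.nodup_finRange n)
    (cox_eq_wordProd ▸ h) (List.mem_finRange i)

lemma pos_of_mulVec_eq_zero (hoff : ∀ i j, i ≠ j → A i j ≤ 0)
    (hsym : ∀ i j, A i j = 0 ↔ A j i = 0) (hconn : (gcmGraph A hsym).Connected)
    {v : Fin n → ℤ} (hv : 0 ≤ v) (hv0 : v ≠ 0) (hAv : A *ᵥ v = 0) (i : Fin n) : 0 < v i := by
  -- all terms of `(A *ᵥ v) y` are `≤ 0`, hence `0`; so the support of `v` is closed under adjacency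
  have hclosed (x y : Fin n) (hxy : (gcmGraph A hsym).Adj x y) (hx : v x ≠ 0) : v y ≠ 0 := by
    intro hy
    have hterms : ∀ u ∈ Finset.univ, A y u * v u ≤ 0 := by
      intro u _
      rcases eq_or_ne u y with rfl | hne
      · simp [hy]
      · exact mul_nonpos_of_nonpos_of_nonneg (hoff y u hne.symm) (hv u)
    have hsum : ∑ u, A y u * v u = 0 := congrFun hAv y
    have hyx := (Finset.sum_eq_zero_iff_of_nonpos hterms).1 hsum x (Finset.mem_univ x)
    exact hxy.2 ((hsym x y).2 ((mul_eq_zero.1 hyx).resolve_right hx))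
  obtain ⟨i₀, hi₀⟩ := Function.ne_iff.1 hv0
  have hreach := (SimpleGraph.reachable_iff_reflTransGen _ _).1 (hconn.preconnected i₀ i)
  have hvi : v i ≠ 0 := by
    induction hreach with
    | refl => exact hi₀
    | tail _ hadj ih => exact hclosed _ _ hadj ih
  exact (hv i).lt_of_ne' hvi

lemma IndefiniteType.mulVec_ne_zero (hIndef : IndefiniteType A)
    (hoff : ∀ i j, i ≠ j → A i j ≤ 0) [Nonempty (Fin n)] {v : Fin n → ℤ} (hv : ∀ i, 0 < v i) :
    A *ᵥ v ≠ 0 := by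
  intro hAv
  obtain ⟨u, -, hAu⟩ := hIndef
  -- with `k` maximising `u i / v i`, the vector `x = u k • v - v k • u` is `≥ 0` and vanishes
  -- at `k`, so `(A *ᵥ x) k ≤ 0`; but `(A *ᵥ x) k = - v k * (A *ᵥ u) k > 0`
  obtain ⟨k, -, hk⟩ :=
    Finset.exists_max_image Finset.univ (fun i => (u i : ℚ) / v i) Finset.univ_nonempty
  set x := u k • v - v k • u
  have hx (i : Fin n) : 0 ≤ x i := by
    have h := hk i (Finset.mem_univ i)
    rw [div_le_div_iff₀ (by exact_mod_cast hv i) (by exact_mod_cast hv k)] at h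
    have h' : u i * v k ≤ u k * v i := by exact_mod_cast h
    simp only [x, Pi.sub_apply, Pi.smul_apply, smul_eq_mul]
    linarith
  have hxk : x k = 0 := by
    simp only [x, Pi.sub_apply, Pi.smul_apply, smul_eq_mul]
    ring
  have hAx : (A *ᵥ x) k = -(v k * (A *ᵥ u) k) := by
    simp only [x, Matrix.mulVec_sub, Matrix.mulVec_smul, hAv, Pi.sub_apply, Pi.smul_apply,
      Pi.zero_apply, smul_eq_mul]
    ring
  have hnonpos : (A *ᵥ x) k ≤ 0 := by
    rw [Matrix.mulVec, dotProduct]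
    refine Finset.sum_nonpos fun i _ => ?_
    rcases eq_or_ne i k with rfl | hik
    · simp [hxk]
    · exact mul_nonpos_of_nonpos_of_nonneg (hoff k i hik.symm) (hx i)
  nlinarith [hv k, hAu k]

lemma cox_pow_apply_ne_self (hoff : ∀ i j, i ≠ j → A i j ≤ 0)
    {hsym : ∀ i j, A i j = 0 ↔ A j i = 0} (hconn : (gcmGraph A hsym).Connected)
    (hIndef : IndefiniteType A) {α : Fin n → ℤ} (hα : α ∈ posImRoots A h2 hsym) {m : ℕ}
    (hm : 0 < m) : (cox A h2 ^ m) α ≠ α := by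
  intro hfix
  set w := cox A h2
  have hpos (t : ℕ) : IsPos ((w ^ t) α) :=
    isPos_of_mem_posImRoots hoff hsym (apply_mem_posImRoots (pow_mem cox_mem_weyl t) hα)
  set β := ∑ t ∈ Finset.range m, (w ^ t) α
  have hwβ : w β = β := by
    have hshift := Finset.sum_range_succ' (fun t => (w ^ t) α) m
    rw [Finset.sum_range_succ, pow_zero, hfix] at hshift
    simp only [β, map_sum, ← LinearEquiv.mul_apply, ← pow_succ']
    exact (add_right_cancel hshift).symm
  have hβ : 0 ≤ β := Finset.sum_nonneg fun t _ => (hpos t).nonneg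
  have hαβ : α ≤ β := by
    simpa using Finset.single_le_sum (fun t _ => (hpos t).nonneg) (Finset.mem_range.2 hm)
  have hβ0 : β ≠ 0 := fun h => (hpos 0).1 (by simpa using le_antisymm (h ▸ hαβ) (hpos 0).nonneg)
  have hAβ := mulVec_eq_zero_of_cox_apply_eq hwβ
  have : Nonempty (Fin n) := by
    obtain ⟨i, -⟩ := Function.ne_iff.1 hβ0
    exact ⟨i⟩
  exact hIndef.mulVec_ne_zero hoff (pos_of_mulVec_eq_zero hoff hsym hconn hβ hβ0 hAβ) hAβ

lemma injective_cox_zpow_apply (hoff : ∀ i j, i ≠ j → A i j ≤ 0)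
    {hsym : ∀ i j, A i j = 0 ↔ A j i = 0} (hconn : (gcmGraph A hsym).Connected)
    (hIndef : IndefiniteType A) {α : Fin n → ℤ} (hα : α ∈ posImRoots A h2 hsym) :
    Function.Injective fun l : ℤ => (cox A h2 ^ l) α := by
  have hne_of_lt {a b : ℤ} (hab : a < b) (h : (cox A h2 ^ a) α = (cox A h2 ^ b) α) : False := by
    refine cox_pow_apply_ne_self hoff hconn hIndef hα (m := (b - a).toNat) (by omega) ?_
    rw [← zpow_natCast, Int.toNat_of_nonneg (by omega), sub_eq_neg_add, _root_.zpow_add,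
      LinearEquiv.mul_apply, ← h, ← LinearEquiv.mul_apply, ← _root_.zpow_add, neg_add_cancel,
      zpow_zero]
    rfl
  intro a b h
  rcases lt_trichotomy a b with hab | rfl | hab
  exacts [(hne_of_lt hab h).elim, rfl, (hne_of_lt hab h.symm).elim]

lemma tendsto_ht_cofinite_atTop {ι : Type*} {f : ι → Fin n → ℤ} (hf : Function.Injective f)
    (hpos : ∀ x, 0 ≤ f x) : Tendsto (fun x => ht (f x)) cofinite atTop := by
  refine tendsto_atTop.2 fun b => eventually_cofinite.2 ?_
  refine ((Set.finite_Icc (0 : Fin n → ℤ) fun _ => b).preimage hf.injOn).subset fun x hx => ?_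
  refine ⟨hpos x, fun i => ?_⟩
  calc f x i ≤ ∑ j, f x j := Finset.single_le_sum (fun j _ => hpos x j) (Finset.mem_univ i)
    _ ≤ b := (not_le.1 hx).le

end

theorem imaginary_root_coxeter_orbit_general (n : ℕ)
    (A : Matrix (Fin n) (Fin n) ℤ) (hA : IsGCM A) (hInd : Indecomposable A hA.2.2)
    (hIndef : IndefiniteType A)
    (α : Fin n → ℤ) (hα : α ∈ posImRoots A hA.1 hA.2.2) :
    (∀ l : ℤ, (cox A hA.1 ^ l) α ∈ posRoots A hA.1 hA.2.2) ∧
      Filter.Tendsto (fun l : ℤ => ht ((cox A hA.1 ^ l) α)) Filter.atTop Filter.atTop ∧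
      Filter.Tendsto (fun l : ℤ => ht ((cox A hA.1 ^ l) α)) Filter.atBot Filter.atTop := by
  obtain ⟨h2, hoff, hsym⟩ := hA
  have hmem (l : ℤ) : (cox A h2 ^ l) α ∈ posImRoots A h2 hsym :=
    apply_mem_posImRoots (zpow_mem cox_mem_weyl l) hα
  have hpos (l : ℤ) : IsPos ((cox A h2 ^ l) α) := isPos_of_mem_posImRoots hoff hsym (hmem l)
  have hht := tendsto_ht_cofinite_atTop (injective_cox_zpow_apply hoff hInd hIndef hα)
    fun l => (hpos l).nonneg
  exact ⟨fun l => ⟨Or.inl (Or.inr (hmem l)), hpos l⟩, hht.mono_left atTop_le_cofinite,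
    hht.mono_left atBot_le_cofinite⟩

/-- if `A` is indecomposable of indefinite type, `w = s 1 ∘ ⋯ ∘ s n` is the
Coxeter element and `α` is a positive imaginary root, then `w^l α ∈ Δ₊` for every integer
`l`, and `ht(w^l α)` tends to infinity both as `l → +∞` and as `l → -∞`. -/
theorem imaginary_root_coxeter_orbit (n : ℕ) (hn : 1 ≤ n)
    (A : Matrix (Fin n) (Fin n) ℤ) (hA : IsGCM A) (hInd : Indecomposable A hA.2.2)
    (hIndef : IndefiniteType A)
    (α : Fin n → ℤ) (hα : α ∈ posImRoots A hA.1 hA.2.2) :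
    (∀ l : ℤ, (cox A hA.1 ^ l) α ∈ posRoots A hA.1 hA.2.2) ∧
      Filter.Tendsto (fun l : ℤ => ht ((cox A hA.1 ^ l) α)) Filter.atTop Filter.atTop ∧
      Filter.Tendsto (fun l : ℤ => ht ((cox A hA.1 ^ l) α)) Filter.atBot Filter.atTop :=
  imaginary_root_coxeter_orbit_general n A hA hInd hIndef α hα

end KacMoodyPaper
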